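/- Let A be a 5×5 real matrix with nonnegative entries, spectral radius r(A) = 1, and a_{11} = 0. Then the spread of A satisfies s(A) ≥ 5/(8 + √74). -/

import Mathlib

open Matrix Polynomial

/-- The eigenvalues of a real square matrix: the multiset of roots (with multiplicity)
of its characteristic polynomial over `ℂ`. -/
noncomputable def eigs {n : ℕ} (A : Matrix (Fin n) (Fin n) ℝ) : Multiset ℂ :=
  ((A.map Complex.ofReal).charpoly).roots

/-- The spectral radius: the maximum of `|λ|` over the eigenvalues `λ`. -/
noncomputable def specRad {n : ℕ} (A : Matrix (Fin n) (Fin n) ℝ) : ℝ :=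
  sSup {r : ℝ | ∃ μ ∈ eigs A, r = ‖μ‖}

/-- The spread: the maximum of `|λ - μ|` over pairs of eigenvalues `λ, μ`. -/
noncomputable def spread {n : ℕ} (A : Matrix (Fin n) (Fin n) ℝ) : ℝ :=
  sSup {r : ℝ | ∃ μ ∈ eigs A, ∃ ν ∈ eigs A, r = ‖μ - ν‖}

/-!
Let `μ` be an eigenvalue with `|μ| = r(A) = 1`, let `s` be the spread, `t = tr A`, and
`q = tr A²`, which is the sum of the squares of the eigenvalues. Summing over the eigenvalues,
`∑ (μ - ν)² = n μ² - 2 t μ + q`, and the term `ν = μ` vanishes, so its real part is at most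
`(n - 1) s²`; since `t` is real, the imaginary part of `∑ (μ - ν)` gives
`n |Im μ| ≤ (n - 1) s`. Nonnegativity gives `(A²)ᵢᵢ ≥ aᵢᵢ²`, so with `a₁₁ = 0` Cauchy–Schwarz
on the other `n - 1` diagonal entries gives `t² ≤ (n - 1) q`, which eliminates `t` from the
first bound by completing a square. With `|μ| = 1` this yields
`n² ≤ (n²(n - 1) + (n + 1)(n - 1)²) s²`, that is `s ≥ 5/14 ≥ 5/(8 + √74)` for `n = 5`.
-/

namespace Matrix

section IsAlgClosed

variable {K : Type*} [Field K] [IsAlgClosed K] {n : Type*} [Fintype n] [DecidableEq n]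

lemma card_roots_charpoly (M : Matrix n n K) :
    Multiset.card M.charpoly.roots = Fintype.card n := by
  rw [← charpoly_natDegree_eq_dim M, ← splits_iff_card_roots.mp (IsAlgClosed.splits _)]

lemma eval_charpoly_eq_prod_roots (M : Matrix n n K) (z : K) :
    M.charpoly.eval z = (M.charpoly.roots.map (z - ·)).prod := by
  conv_lhs => rw [(IsAlgClosed.splits M.charpoly).eq_prod_roots_of_monic M.charpoly_monic]
  simp only [eval_multiset_prod, Multiset.map_map, Function.comp_def, eval_sub, eval_X, eval_C]

lemma det_scalar_add_eq_prod_roots (M : Matrix n n K) (z : K) :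
    (scalar n z + M).det = (M.charpoly.roots.map (z + ·)).prod := by
  have hneg : scalar n z + M = -(scalar n (-z) - M) := by
    rw [neg_sub, map_neg, sub_neg_eq_add, add_comm]
  have hmap : M.charpoly.roots.map (-z - ·) = (M.charpoly.roots.map (z + ·)).map Neg.neg := by
    rw [Multiset.map_map]
    exact Multiset.map_congr rfl fun ν _ => by simp only [Function.comp_apply]; ring
  rw [hneg, det_neg, ← eval_charpoly, eval_charpoly_eq_prod_roots, hmap, Multiset.prod_map_neg,
    Multiset.card_map, card_roots_charpoly, ← mul_assoc, ← mul_pow, neg_one_mul, neg_neg, one_pow,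
    one_mul]

theorem charpoly_mul_self (M : Matrix n n K) :
    (M * M).charpoly = ((M.charpoly.roots.map (· ^ 2)).map (X - C ·)).prod := by
  refine Polynomial.funext fun w => ?_
  obtain ⟨z, rfl⟩ := IsAlgClosed.exists_eq_mul_self w
  have hfac : scalar n (z * z) - M * M = (scalar n z - M) * (scalar n z + M) := by
    rw [sub_mul, mul_add, mul_add, map_mul, (scalar_commute z (fun _ => Commute.all _ _) M).eq]
    abel
  rw [eval_charpoly, hfac, det_mul, ← eval_charpoly, det_scalar_add_eq_prod_roots,
    eval_charpoly_eq_prod_roots, ← Multiset.prod_map_mul]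
  simp only [eval_multiset_prod, Multiset.map_map, Function.comp_def, eval_sub, eval_X, eval_C]
  exact congrArg _ <| Multiset.map_congr rfl fun ν _ => by ring

theorem trace_mul_self_eq_sum_roots_sq (M : Matrix n n K) :
    (M * M).trace = (M.charpoly.roots.map (· ^ 2)).sum := by
  rw [trace_eq_sum_roots_charpoly, charpoly_mul_self, roots_multiset_prod_X_sub_C]

end IsAlgClosed

lemma sq_diag_le_diag_mul_self {ι : Type*} [Fintype ι] {A : Matrix ι ι ℝ}
    (hA : ∀ i j, 0 ≤ A i j) (i : ι) : A i i ^ 2 ≤ (A * A) i i := by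
  rw [mul_apply, sq]
  exact Finset.single_le_sum (f := fun j => A i j * A j i)
    (fun j _ => mul_nonneg (hA i j) (hA j i)) (Finset.mem_univ i)

lemma trace_sq_le_of_diag_eq_zero {ι : Type*} [Fintype ι] [DecidableEq ι]
    {A : Matrix ι ι ℝ} (hA : ∀ i j, 0 ≤ A i j) {i₀ : ι} (hi₀ : A i₀ i₀ = 0) :
    A.trace ^ 2 ≤ (Fintype.card ι - 1) * (A * A).trace := by
  have hcard : ((Finset.univ.erase i₀).card : ℝ) = Fintype.card ι - 1 := by
    rw [Finset.card_erase_of_mem (Finset.mem_univ _), Finset.card_univ,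
      Nat.cast_sub (Fintype.card_pos_iff.mpr ⟨i₀⟩), Nat.cast_one]
  have htrace : A.trace = ∑ i ∈ Finset.univ.erase i₀, A i i :=
    (Finset.sum_erase (f := fun i => A i i) _ hi₀).symm
  calc A.trace ^ 2 ≤ (Fintype.card ι - 1) * ∑ i ∈ Finset.univ.erase i₀, A i i ^ 2 := by
        rw [htrace, ← hcard]; exact sq_sum_le_card_mul_sum_sq
    _ ≤ (Fintype.card ι - 1) * (A * A).trace := by
        refine mul_le_mul_of_nonneg_left ?_ (hcard ▸ Nat.cast_nonneg _)
        calc ∑ i ∈ Finset.univ.erase i₀, A i i ^ 2 ≤ ∑ i ∈ Finset.univ.erase i₀, (A * A) i i :=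
              Finset.sum_le_sum fun i _ => sq_diag_le_diag_mul_self hA i
          _ ≤ (A * A).trace := Finset.sum_le_sum_of_subset_of_nonneg (Finset.erase_subset _ _)
              fun i _ _ => (sq_nonneg _).trans (sq_diag_le_diag_mul_self hA i)

end Matrix

lemma Multiset.sum_map_le_of_mem_of_eq_zero {α : Type*} {S : Multiset α} {a : α} (ha : a ∈ S)
    {f : α → ℝ} {c : ℝ} (hfa : f a = 0) (hf : ∀ x ∈ S, f x ≤ c) :
    (S.map f).sum ≤ (card S - 1) * c := by
  obtain ⟨T, rfl⟩ := Multiset.exists_cons_of_mem ha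
  rw [Multiset.map_cons, Multiset.sum_cons, hfa, zero_add, Multiset.card_cons, Nat.cast_succ,
    add_sub_cancel_right, ← Multiset.card_map f, ← nsmul_eq_mul]
  refine Multiset.sum_le_card_nsmul _ _ fun y hy => ?_
  obtain ⟨x, hx, rfl⟩ := Multiset.mem_map.mp hy
  exact hf x (Multiset.mem_cons_of_mem hx)

lemma Complex.re_multiset_sum (S : Multiset ℂ) : S.sum.re = (S.map Complex.re).sum :=
  map_multiset_sum Complex.reAddGroupHom S

lemma Complex.im_multiset_sum (S : Multiset ℂ) : S.sum.im = (S.map Complex.im).sum :=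
  map_multiset_sum Complex.imAddGroupHom S

lemma Multiset.sum_map_const_sub {R : Type*} [CommRing R] (S : Multiset R) (a : R) :
    (S.map fun x => a - x).sum = card S * a - S.sum := by
  rw [Multiset.sum_map_sub, Multiset.map_const', Multiset.sum_replicate, Multiset.map_id',
    nsmul_eq_mul]

lemma Multiset.sum_map_const_sub_sq {R : Type*} [CommRing R] (S : Multiset R) (a : R) :
    (S.map fun x => (a - x) ^ 2).sum = card S * a ^ 2 - 2 * a * S.sum + (S.map (· ^ 2)).sum := by
  have h : (fun x => (a - x) ^ 2) = fun x => (a ^ 2 - 2 * a * x) + x ^ 2 := by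
    funext x; ring
  rw [h, Multiset.sum_map_add, Multiset.sum_map_sub, Multiset.sum_map_mul_left, Multiset.map_const',
    Multiset.sum_replicate, Multiset.map_id', nsmul_eq_mul]

theorem sq_le_mul_sq_of_norm_sub_le {n : ℕ} {S : Multiset ℂ} {μ : ℂ} {t q s : ℝ}
    (hn : 2 ≤ n) (hS : Multiset.card S = n) (hμ : μ ∈ S) (hμ1 : ‖μ‖ = 1)
    (ht : S.sum = (t : ℂ)) (hq : (S.map (· ^ 2)).sum = (q : ℂ)) (htq : t ^ 2 ≤ (n - 1) * q)
    (hs : ∀ ν ∈ S, ‖μ - ν‖ ≤ s) :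
    (n : ℝ) ^ 2 ≤ (n ^ 2 * (n - 1) + (n + 1) * (n - 1) ^ 2) * s ^ 2 := by
  have hsum_re : (S.map fun ν => ((μ - ν) ^ 2).re).sum ≤ (n - 1) * s ^ 2 := hS ▸
    Multiset.sum_map_le_of_mem_of_eq_zero hμ (by simp) fun ν hν =>
      ((Complex.re_le_norm _).trans_eq (norm_pow _ 2)).trans
        (pow_le_pow_left₀ (norm_nonneg _) (hs ν hν) 2)
  have hsum_im : (S.map fun ν => |(μ - ν).im|).sum ≤ (n - 1) * s := hS ▸
    Multiset.sum_map_le_of_mem_of_eq_zero hμ (by simp) fun ν hν =>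
      (Complex.abs_im_le_norm _).trans (hs ν hν)
  have hre : n * (μ.re ^ 2 - μ.im ^ 2) - 2 * t * μ.re + q ≤ (n - 1) * s ^ 2 :=
    calc n * (μ.re ^ 2 - μ.im ^ 2) - 2 * t * μ.re + q
        = (S.map fun ν => (μ - ν) ^ 2).sum.re := by
          rw [Multiset.sum_map_const_sub_sq, hS, ht, hq]
          simp only [sq, Complex.add_re, Complex.sub_re, Complex.mul_re, Complex.mul_im,
            Complex.natCast_re, Complex.natCast_im, Complex.re_ofNat, Complex.im_ofNat,
            Complex.ofReal_re, Complex.ofReal_im]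
          ring
      _ = (S.map fun ν => ((μ - ν) ^ 2).re).sum := by
          rw [Complex.re_multiset_sum, Multiset.map_map]; rfl
      _ ≤ (n - 1) * s ^ 2 := hsum_re
  have him : n * |μ.im| ≤ (n - 1) * s :=
    calc n * |μ.im| = |(S.map fun ν => μ - ν).sum.im| := by
          rw [Multiset.sum_map_const_sub, hS, ht]
          simp [abs_mul]
      _ = |(S.map fun ν => (μ - ν).im).sum| := by
          rw [Complex.im_multiset_sum, Multiset.map_map]; rfl
      _ ≤ (S.map fun ν => |(μ - ν).im|).sum := by
          rw [← Function.comp_def abs, ← Multiset.map_map]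
          exact Multiset.abs_sum_le_sum_abs
      _ ≤ (n - 1) * s := hsum_im
  have hμ2 : μ.re ^ 2 + μ.im ^ 2 = 1 := by
    have := Complex.sq_norm μ
    rw [hμ1, Complex.normSq_apply] at this
    linarith
  have hn1 : (1 : ℝ) ≤ n - 1 := by linarith [show (2 : ℝ) ≤ n by exact_mod_cast hn]
  have hre_t : μ.re ^ 2 - n * μ.im ^ 2 ≤ (n - 1) * s ^ 2 := by
    refine le_of_mul_le_mul_left ?_ (by linarith : (0 : ℝ) < n - 1)
    -- completing the square in `t`, using `t² ≤ (n - 1) q`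
    nlinarith [sq_nonneg (t - (n - 1) * μ.re)]
  have him_sq : n ^ 2 * μ.im ^ 2 ≤ (n - 1) ^ 2 * s ^ 2 := by
    simpa only [mul_pow, sq_abs] using pow_le_pow_left₀ (by positivity) him 2
  calc (n : ℝ) ^ 2 = n ^ 2 * (μ.re ^ 2 - n * μ.im ^ 2) + (n + 1) * (n ^ 2 * μ.im ^ 2) := by
        linear_combination (-(n : ℝ) ^ 2) * hμ2
    _ ≤ n ^ 2 * ((n - 1) * s ^ 2) + (n + 1) * ((n - 1) ^ 2 * s ^ 2) := by gcongr
    _ = (n ^ 2 * (n - 1) + (n + 1) * (n - 1) ^ 2) * s ^ 2 := by ring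

section eigs
variable {n : ℕ} (A : Matrix (Fin n) (Fin n) ℝ)

lemma card_eigs : Multiset.card (eigs A) = n := by
  rw [eigs, card_roots_charpoly, Fintype.card_fin]

lemma sum_eigs : (eigs A).sum = (A.trace : ℂ) := by
  rw [eigs, ← trace_eq_sum_roots_charpoly]
  exact (AddMonoidHom.map_trace Complex.ofRealHom A).symm

lemma sum_sq_eigs : ((eigs A).map (· ^ 2)).sum = ((A * A).trace : ℂ) := by
  rw [eigs, ← trace_mul_self_eq_sum_roots_sq]
  exact (congrArg trace (Matrix.map_mul (f := Complex.ofRealHom))).symm.trans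
    (AddMonoidHom.map_trace Complex.ofRealHom (A * A)).symm

lemma exists_mem_eigs_norm_eq_specRad [NeZero n] : ∃ μ ∈ eigs A, ‖μ‖ = specRad A := by
  have hfin : {r : ℝ | ∃ μ ∈ eigs A, r = ‖μ‖}.Finite :=
    ((eigs A).toFinset.finite_toSet.image (‖·‖)).subset fun r ⟨μ, hμ, hr⟩ =>
      ⟨μ, Multiset.mem_toFinset.mpr hμ, hr.symm⟩
  obtain ⟨μ, hμ⟩ := Multiset.card_pos_iff_exists_mem.mp ((card_eigs A).symm ▸ NeZero.pos n)
  obtain ⟨ν, hν, h⟩ := Set.Nonempty.csSup_mem (s := {r : ℝ | ∃ μ ∈ eigs A, r = ‖μ‖})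
    ⟨‖μ‖, μ, hμ, rfl⟩ hfin
  exact ⟨ν, hν, h.symm⟩

lemma norm_sub_le_spread {μ ν : ℂ} (hμ : μ ∈ eigs A) (hν : ν ∈ eigs A) :
    ‖μ - ν‖ ≤ spread A := by
  have hfin : {r : ℝ | ∃ μ ∈ eigs A, ∃ ν ∈ eigs A, r = ‖μ - ν‖}.Finite :=
    ((eigs A).toFinset.finite_toSet.image2 (fun μ ν => ‖μ - ν‖)
      (eigs A).toFinset.finite_toSet).subset fun r ⟨μ, hμ, ν, hν, hr⟩ =>
      ⟨μ, Multiset.mem_toFinset.mpr hμ, ν, Multiset.mem_toFinset.mpr hν, hr.symm⟩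
  exact le_csSup hfin.bddAbove ⟨μ, hμ, ν, hν, rfl⟩

end eigs

theorem le_spread_of_diag_eq_zero {n : ℕ} (A : Matrix (Fin n) (Fin n) ℝ) (hn : 2 ≤ n)
    (hA : ∀ i j, 0 ≤ A i j) (hr : specRad A = 1) {i₀ : Fin n} (hi₀ : A i₀ i₀ = 0) :
    n / √(n ^ 2 * (n - 1) + (n + 1) * (n - 1) ^ 2) ≤ spread A := by
  have : NeZero n := ⟨by omega⟩
  obtain ⟨μ, hμ, hμ1⟩ := exists_mem_eigs_norm_eq_specRad A
  have hs : ∀ ν ∈ eigs A, ‖μ - ν‖ ≤ spread A := fun ν hν => norm_sub_le_spread A hμ hν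
  have key := sq_le_mul_sq_of_norm_sub_le hn (card_eigs A) hμ (hμ1.trans hr) (sum_eigs A)
    (sum_sq_eigs A) (by simpa using trace_sq_le_of_diag_eq_zero hA hi₀) hs
  have hs0 : 0 ≤ spread A := by simpa using hs μ hμ
  have hn1 : (1 : ℝ) ≤ n - 1 := by linarith [show (2 : ℝ) ≤ n by exact_mod_cast hn]
  rw [div_le_iff₀ (Real.sqrt_pos.mpr (by positivity)), ← Real.sqrt_sq hs0,
    ← Real.sqrt_mul (sq_nonneg _), Real.le_sqrt (by positivity) (by positivity)]
  linarith

theorem spread_ge_five_by_five (A : Matrix (Fin 5) (Fin 5) ℝ)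
    (hA : ∀ i j, 0 ≤ A i j) (hr : specRad A = 1) (h11 : A 0 0 = 0) :
    5 / (8 + Real.sqrt 74) ≤ spread A := by
  have h := le_spread_of_diag_eq_zero A (by norm_num) hA hr h11
  have h196 : √((5 : ℝ) ^ 2 * (5 - 1) + (5 + 1) * (5 - 1) ^ 2) = 14 := by
    rw [show (5 : ℝ) ^ 2 * (5 - 1) + (5 + 1) * (5 - 1) ^ 2 = 14 ^ 2 by norm_num]
    exact Real.sqrt_sq (by norm_num)
  have h74 : 6 ≤ √74 := Real.le_sqrt_of_sq_le (by norm_num)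
  push_cast at h
  rw [h196] at h
  exact le_trans (div_le_div_of_nonneg_left (by norm_num) (by norm_num) (by linarith)) h
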